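/- arXiv:2108.08703 — 5 statements merged into one kernel-verified Lean document; each statement's English description precedes it below -/
import Mathlib

section
/- Let R_D be a dimensioned ring and I ⊆ R a dimensioned ideal (a dimensional subgroup with a·i ∈ I for all a ∈ R, i ∈ I). Then the slice-wise quotient R/I := ⋃_{d∈δ(I)} R_d/(I ∩ R_d) carries a canonical dimensioned ring structure, given by (a_d + I_d)·(b_e + I_e) = a_d·b_e + I_{de}, such that the projection q: R → R/I is a morphism of dimensioned rings. -/
/-- A dimensioned ring: a family of abelian-group slices `A d` indexed by a monoid `D`
of dimensions (equivalently, a surjection `δ : Σ d, A d → D`), with a totally defined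
multiplication compatible with dimensions (`mul : A d → A e → A (d*e)`), associative and
unital, and distributive over the slice-wise (partial) addition whenever defined. -/
class DimRing {D : Type*} [Monoid D] (A : D → Type*) [∀ d, AddCommGroup (A d)] where
  mul : ∀ {d e : D}, A d → A e → A (d * e)
  one : A 1
  mul_assoc : ∀ {d e f : D} (a : A d) (b : A e) (c : A f),
    HEq (mul (mul a b) c) (mul a (mul b c))
  one_mul : ∀ {d : D} (a : A d), HEq (mul one a) a
  mul_one : ∀ {d : D} (a : A d), HEq (mul a one) a
  mul_add : ∀ {d e : D} (a : A d) (b c : A e), mul a (b + c) = mul a b + mul a c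
  add_mul : ∀ {d e : D} (a b : A d) (c : A e), mul (a + b) c = mul a c + mul b c

section Aux
variable {D : Type*} [Monoid D] {A : D → Type*} [∀ d, AddCommGroup (A d)] [DimRing A]
  (I : ∀ d, AddSubgroup (A d))

omit [Monoid D] [DimRing A] in
theorem heq_mk {d e : D} (h : d = e) {a : A d} {b : A e} (hab : HEq a b) :
    HEq (QuotientAddGroup.mk (s := I d) a) (QuotientAddGroup.mk (s := I e) b) := by
  subst h; rw [eq_of_heq hab]

theorem DR.zero_mul {d e : D} (b : A e) : DimRing.mul (0 : A d) b = 0 := by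
  have := DimRing.add_mul (0 : A d) 0 b
  rw [add_zero] at this
  exact left_eq_add.mp this

theorem DR.mul_zero {d e : D} (a : A d) : DimRing.mul a (0 : A e) = 0 := by
  have := DimRing.mul_add a (0 : A e) 0
  rw [add_zero] at this
  exact left_eq_add.mp this

theorem DR.neg_mul {d e : D} (a : A d) (b : A e) :
    DimRing.mul (-a) b = -DimRing.mul a b := by
  have := DimRing.add_mul (-a) a b
  rw [neg_add_cancel, DR.zero_mul] at this
  linear_combination (norm := abel) this.symm

theorem DR.mul_neg {d e : D} (a : A d) (b : A e) :
    DimRing.mul a (-b) = -DimRing.mul a b := by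
  have := DimRing.mul_add a (-b) b
  rw [neg_add_cancel, DR.mul_zero] at this
  linear_combination (norm := abel) this.symm

variable (hI : ∀ {d e : D} (a : A d) (i : A e), i ∈ I e → DimRing.mul a i ∈ I (d * e))
  (hI' : ∀ {d e : D} (i : A d) (a : A e), i ∈ I d → DimRing.mul i a ∈ I (d * e))

def qmul {d e : D} (x : A d ⧸ I d) (y : A e ⧸ I e) : A (d * e) ⧸ I (d * e) :=
  Quotient.map₂' DimRing.mul (by
    intro a a' ha b b' hb
    rw [QuotientAddGroup.leftRel_apply] at *
    have key : -DimRing.mul a b + DimRing.mul a' b'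
        = DimRing.mul (-a + a') b + DimRing.mul a' (-b + b') := by
      rw [DimRing.add_mul, DimRing.mul_add, DR.neg_mul, DR.mul_neg]
      abel
    rw [key]
    exact (I (d*e)).add_mem (hI' _ _ ha) (hI _ _ hb)) x y

theorem qmul_mk {d e : D} (a : A d) (b : A e) :
    qmul I hI hI' (QuotientAddGroup.mk a) (QuotientAddGroup.mk b)
      = QuotientAddGroup.mk (DimRing.mul a b) := rfl

end Aux

/-- Quotient dimensioned ring: quotienting each slice of a dimensioned ring by the
corresponding slice of a dimensioned ideal yields a dimensioned ring structure for which
the slice-wise quotient projection is a morphism of dimensioned rings (additive on slices,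
multiplicative, and unital). -/
theorem stmt2 {D : Type*} [Monoid D] (A : D → Type*) [∀ d, AddCommGroup (A d)]
    [DimRing A] (I : ∀ d, AddSubgroup (A d))
    (hI : ∀ {d e : D} (a : A d) (i : A e), i ∈ I e → DimRing.mul a i ∈ I (d * e))
    (hI' : ∀ {d e : D} (i : A d) (a : A e), i ∈ I d → DimRing.mul i a ∈ I (d * e)) :
    ∃ inst : DimRing (fun d => A d ⧸ I d),
      (∀ (d : D) (a b : A d),
        QuotientAddGroup.mk (s := I d) (a + b) =
          QuotientAddGroup.mk (s := I d) a + QuotientAddGroup.mk (s := I d) b) ∧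
      (∀ (d e : D) (a : A d) (b : A e),
        QuotientAddGroup.mk (s := I (d * e)) (DimRing.mul a b) =
          inst.mul (QuotientAddGroup.mk (s := I d) a) (QuotientAddGroup.mk (s := I e) b)) ∧
      (QuotientAddGroup.mk (s := I 1) DimRing.one = inst.one) := by
  refine ⟨{ mul := qmul I hI hI'
            one := QuotientAddGroup.mk (DimRing.one)
            mul_assoc := ?_
            one_mul := ?_
            mul_one := ?_
            mul_add := ?_
            add_mul := ?_ }, ?_, ?_, ?_⟩
  · intro d e f x y z
    induction x using QuotientAddGroup.induction_on
    induction y using QuotientAddGroup.induction_on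
    induction z using QuotientAddGroup.induction_on
    exact heq_mk I (mul_assoc d e f) (DimRing.mul_assoc _ _ _)
  · intro d x
    induction x using QuotientAddGroup.induction_on
    exact heq_mk I (one_mul d) (DimRing.one_mul _)
  · intro d x
    induction x using QuotientAddGroup.induction_on
    exact heq_mk I (mul_one d) (DimRing.mul_one _)
  · intro d e x y z
    induction x using QuotientAddGroup.induction_on
    induction y using QuotientAddGroup.induction_on
    induction z using QuotientAddGroup.induction_on
    exact congrArg QuotientAddGroup.mk (DimRing.mul_add _ _ _)
  · intro d e x y z
    induction x using QuotientAddGroup.induction_on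
    induction y using QuotientAddGroup.induction_on
    induction z using QuotientAddGroup.induction_on
    exact congrArg QuotientAddGroup.mk (DimRing.add_mul _ _ _)
  · intro d a b; exact rfl
  · intro d e a b; exact (qmul_mk I hI hI' a b).symm
  · rfl
end

section
/- Let L be a 1-dimensional vector space over a field 𝔽 and define L^n := L^{⊗n} for n > 0, L^0 := 𝔽, L^n := (L*)^{⊗(-n)} for n < 0. Then the power L^⊙ := ⋃_{n∈ℤ} L^n with slice-wise vector space addition and the multiplication ⊙ induced by the tensor product (using the canonical pairing L* ⊗ L ≅ 𝔽 for mixed powers) is a dimensioned field with dimension group ℤ: it is a commutative dimensioned ring in which every nonzero element has a multiplicative inverse. -/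
open scoped TensorProduct

variable (𝔽 : Type*) [Field 𝔽] (L : Type*) [AddCommGroup L] [Module 𝔽 L]

/-- The `n`-th power of the line `L`: tensor powers of `L` for `n ≥ 0` and tensor powers
of the dual line `L*` for `n < 0`. -/
def LPow : ℤ → Type _ := fun n =>
  Int.rec (fun k => TensorPower 𝔽 k L) (fun k => TensorPower 𝔽 (k + 1) (Module.Dual 𝔽 L)) n

noncomputable instance (n : ℤ) : AddCommGroup (LPow 𝔽 L n) := by
  cases n with
  | ofNat k => exact inferInstanceAs (AddCommGroup (TensorPower 𝔽 k L))
  | negSucc k => exact inferInstanceAs (AddCommGroup (TensorPower 𝔽 (k + 1) (Module.Dual 𝔽 L)))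

noncomputable instance (n : ℤ) : Module 𝔽 (LPow 𝔽 L n) := by
  cases n with
  | ofNat k => exact inferInstanceAs (Module 𝔽 (TensorPower 𝔽 k L))
  | negSucc k => exact inferInstanceAs (Module 𝔽 (TensorPower 𝔽 (k + 1) (Module.Dual 𝔽 L)))


/-- The identity element of the power of a line: the empty tensor product in `L^0`. -/
noncomputable def LPowOne : LPow 𝔽 L 0 :=
  PiTensorProduct.tprod 𝔽 (fun i : Fin 0 => i.elim0)

namespace Stmt11Aux

section Generic
variable {M : Type*} [AddCommGroup M] [Module 𝔽 M] (γ : M →ₗ[𝔽] 𝔽)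

noncomputable def phiT (k : ℕ) : TensorPower 𝔽 k M →ₗ[𝔽] 𝔽 :=
  PiTensorProduct.lift ((MultilinearMap.mkPiAlgebra 𝔽 (Fin k) 𝔽).compLinearMap fun _ => γ)

lemma phiT_tprod (k : ℕ) (f : Fin k → M) :
    phiT 𝔽 γ k (PiTensorProduct.tprod 𝔽 f) = ∏ i, γ (f i) := by
  simp [phiT]

variable (w : M) (hexp : ∀ a : M, a = γ a • w)

include hexp in
lemma expandT (k : ℕ) (x : TensorPower 𝔽 k M) :
    x = phiT 𝔽 γ k x • PiTensorProduct.tprod 𝔽 (fun _ : Fin k => w) := by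
  induction x using PiTensorProduct.induction_on with
  | smul_tprod c f =>
      rw [map_smul, phiT_tprod]
      conv_lhs => rw [show f = fun i => γ (f i) • w from funext fun i => hexp (f i)]
      rw [MultilinearMap.map_smul_univ]
      simp [smul_smul]
  | add x y hx hy => rw [map_add, add_smul, ← hx, ← hy]

end Generic

section Line
variable (v : L) (β : Module.Dual 𝔽 L)

noncomputable def phi : ∀ n : ℤ, LPow 𝔽 L n →ₗ[𝔽] 𝔽
  | .ofNat k => phiT 𝔽 β k
  | .negSucc k => phiT 𝔽 (Module.Dual.eval 𝔽 L v) (k + 1)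

noncomputable def uu : ∀ n : ℤ, LPow 𝔽 L n
  | .ofNat k => PiTensorProduct.tprod 𝔽 (fun _ : Fin k => v)
  | .negSucc k => PiTensorProduct.tprod 𝔽 (fun _ : Fin (k + 1) => β)

variable {𝔽 L v β}

lemma hexpD (hexp : ∀ a : L, a = β a • v) (α : Module.Dual 𝔽 L) : α = α v • β := by
  ext a
  conv_lhs => rw [hexp a]
  simp [mul_comm]

lemma phi_u (hβv : β v = 1) : ∀ n : ℤ, phi 𝔽 L v β n (uu 𝔽 L v β n) = 1
  | .ofNat k => (phiT_tprod 𝔽 β k fun _ => v).trans (by simp [hβv])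
  | .negSucc k =>
      (phiT_tprod 𝔽 (Module.Dual.eval 𝔽 L v) (k + 1) fun _ => β).trans (by simp [hβv])

lemma expand (hexp : ∀ a : L, a = β a • v) :
    ∀ (n : ℤ) (x : LPow 𝔽 L n), x = phi 𝔽 L v β n x • uu 𝔽 L v β n
  | .ofNat k, x => expandT 𝔽 β v hexp k x
  | .negSucc k, x =>
      expandT 𝔽 (Module.Dual.eval 𝔽 L v) β (fun α => hexpD hexp α) (k + 1) x

variable (𝔽 L v β)

noncomputable def mull (m n : ℤ) : LPow 𝔽 L m →ₗ[𝔽] LPow 𝔽 L n →ₗ[𝔽] LPow 𝔽 L (m + n) :=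
  LinearMap.mk₂ 𝔽
    (fun x y => (phi 𝔽 L v β m x * phi 𝔽 L v β n y) • uu 𝔽 L v β (m + n))
    (fun x₁ x₂ y => by rw [map_add, add_mul, add_smul])
    (fun c x y => by rw [map_smul, smul_eq_mul, mul_assoc, mul_smul])
    (fun x y₁ y₂ => by rw [map_add, mul_add, add_smul])
    (fun c x y => by rw [map_smul, smul_eq_mul, mul_left_comm, mul_smul])

variable {𝔽 L v β}

lemma mull_apply (m n : ℤ) (x : LPow 𝔽 L m) (y : LPow 𝔽 L n) :
    mull 𝔽 L v β m n x y = (phi 𝔽 L v β m x * phi 𝔽 L v β n y) • uu 𝔽 L v β (m + n) := rfl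

lemma heq_smul_u {m n : ℤ} (h : m = n) (c : 𝔽) :
    HEq (c • uu 𝔽 L v β m) (c • uu 𝔽 L v β n) := by subst h; rfl

lemma cast_smul_u {m n : ℤ} (h : m = n) (c : 𝔽) :
    cast (congrArg (LPow 𝔽 L) h) (c • uu 𝔽 L v β m) = c • uu 𝔽 L v β n := by subst h; rfl

end Line
end Stmt11Aux

open Stmt11Aux

/-- The power `L^⊙ = ⋃_{n ∈ ℤ} L^n` of a line `L` (a 1-dimensional vector space), with
slice-wise addition and the multiplication `⊙` induced by the tensor product (tensor
concatenation on powers of the same sign, and the canonical pairing `L* ⊗ L ≅ 𝔽` on mixed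
powers), is a commutative dimensioned ring over the dimension group `ℤ` in which every
nonzero element is invertible, i.e. a dimensioned field. -/
theorem stmt11 (h1 : Module.finrank 𝔽 L = 1) :
    ∃ mul : ∀ m n : ℤ, LPow 𝔽 L m →ₗ[𝔽] LPow 𝔽 L n →ₗ[𝔽] LPow 𝔽 L (m + n),
      -- ⊙ is induced by the tensor product: concatenation on positive powers,
      (∀ (k l : ℕ) (f : Fin k → L) (g : Fin l → L),
        mul (Int.ofNat k) (Int.ofNat l)
            (PiTensorProduct.tprod 𝔽 f) (PiTensorProduct.tprod 𝔽 g) =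
          PiTensorProduct.tprod 𝔽 (Fin.append f g)) ∧
      -- concatenation on negative powers,
      (∀ (k l : ℕ) (f : Fin (k + 1) → Module.Dual 𝔽 L)
          (g : Fin (l + 1) → Module.Dual 𝔽 L),
        mul (Int.negSucc k) (Int.negSucc l)
            (PiTensorProduct.tprod 𝔽 f) (PiTensorProduct.tprod 𝔽 g) =
          cast (congrArg (LPow 𝔽 L)
              (show Int.negSucc (k + 1 + l) = Int.negSucc k + Int.negSucc l by
                rw [Int.negSucc_add_negSucc]; congr 1; omega))
            ((PiTensorProduct.tprod 𝔽 (Fin.append f g) :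
              TensorPower 𝔽 (k + 1 + (l + 1)) (Module.Dual 𝔽 L)))) ∧
      -- and the canonical pairing `L* ⊗ L ≅ 𝔽` on mixed powers:
      (∀ (a : L) (α : Module.Dual 𝔽 L),
        mul (Int.ofNat 1) (Int.negSucc 0)
            (PiTensorProduct.tprod 𝔽 (fun _ => a)) (PiTensorProduct.tprod 𝔽 (fun _ => α)) =
          α a • LPowOne 𝔽 L) ∧
      (∀ (a : L) (α : Module.Dual 𝔽 L),
        mul (Int.negSucc 0) (Int.ofNat 1)
            (PiTensorProduct.tprod 𝔽 (fun _ => α)) (PiTensorProduct.tprod 𝔽 (fun _ => a)) =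
          α a • LPowOne 𝔽 L) ∧
      -- `⊙` is unital, associative and commutative:
      (∀ (n : ℤ) (x : LPow 𝔽 L n), HEq (mul 0 n (LPowOne 𝔽 L) x) x) ∧
      (∀ (n : ℤ) (x : LPow 𝔽 L n), HEq (mul n 0 x (LPowOne 𝔽 L)) x) ∧
      (∀ (m n k : ℤ) (x : LPow 𝔽 L m) (y : LPow 𝔽 L n) (z : LPow 𝔽 L k),
        HEq (mul (m + n) k (mul m n x y) z) (mul m (n + k) x (mul n k y z))) ∧
      (∀ (m n : ℤ) (x : LPow 𝔽 L m) (y : LPow 𝔽 L n), HEq (mul m n x y) (mul n m y x)) ∧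
      -- and every nonzero element has a multiplicative inverse:
      (∀ (n : ℤ) (x : LPow 𝔽 L n), x ≠ 0 → ∃ y : LPow 𝔽 L (-n),
        cast (congrArg (LPow 𝔽 L) (add_neg_cancel n)) (mul n (-n) x y) = LPowOne 𝔽 L) := by
  have : Module.Finite 𝔽 L := Module.finite_of_finrank_eq_succ h1
  obtain ⟨b⟩ : Nonempty (Module.Basis (Fin 1) 𝔽 L) := ⟨Module.finBasisOfFinrankEq 𝔽 L h1⟩
  set v : L := b 0 with hv
  set β : Module.Dual 𝔽 L := b.coord 0 with hβ
  have hβv : β v = 1 := by simp [hβ, hv]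
  have hexp : ∀ a : L, a = β a • v := fun a => by
    conv_lhs => rw [← b.sum_repr a]
    simp [hβ, hv, Module.Basis.coord_apply]
  have hone : LPowOne 𝔽 L = uu 𝔽 L v β 0 := by
    show PiTensorProduct.tprod 𝔽 _ = PiTensorProduct.tprod 𝔽 _
    exact congrArg _ (funext fun i => i.elim0)
  have hphione : phi 𝔽 L v β 0 (LPowOne 𝔽 L) = 1 := by
    rw [hone]; exact phi_u hβv 0
  refine ⟨mull 𝔽 L v β, ?_, ?_, ?_, ?_, ?_, ?_, ?_, ?_, ?_⟩
  · -- positive concatenation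
    intro k l f g
    refine (mull_apply _ _ _ _).trans ?_
    have hrhs : (PiTensorProduct.tprod 𝔽 (Fin.append f g) : TensorPower 𝔽 (k + l) L) =
        (∏ i, β (Fin.append f g i)) • PiTensorProduct.tprod 𝔽 (fun _ : Fin (k + l) => v) := by
      conv_lhs => rw [expandT 𝔽 β v hexp (k + l) (PiTensorProduct.tprod 𝔽 (Fin.append f g))]
      rw [phiT_tprod]
    show _ = (PiTensorProduct.tprod 𝔽 (Fin.append f g) : TensorPower 𝔽 (k + l) L)
    rw [hrhs]
    show (phi 𝔽 L v β (Int.ofNat k) _ * phi 𝔽 L v β (Int.ofNat l) _) •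
        uu 𝔽 L v β (Int.ofNat (k + l)) = _
    rw [show uu 𝔽 L v β (Int.ofNat (k + l)) =
        PiTensorProduct.tprod 𝔽 (fun _ : Fin (k + l) => v) from rfl]
    congr 1
    show phiT 𝔽 β k (PiTensorProduct.tprod 𝔽 f) * phiT 𝔽 β l (PiTensorProduct.tprod 𝔽 g) = _
    rw [phiT_tprod, phiT_tprod, Fin.prod_univ_add]
    simp [Fin.append_left, Fin.append_right]
  · -- negative concatenation
    intro k l f g
    refine (mull_apply _ _ _ _).trans ?_
    have hrhs : (PiTensorProduct.tprod 𝔽 (Fin.append f g) :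
          TensorPower 𝔽 (k + 1 + (l + 1)) (Module.Dual 𝔽 L)) =
        (∏ i, (Fin.append f g i) v) •
          PiTensorProduct.tprod 𝔽 (fun _ : Fin (k + 1 + (l + 1)) => β) := by
      conv_lhs => rw [expandT 𝔽 (Module.Dual.eval 𝔽 L v) β (fun α => hexpD hexp α)
        (k + 1 + (l + 1)) (PiTensorProduct.tprod 𝔽 (Fin.append f g))]
      rw [phiT_tprod]
      rfl
    conv_rhs =>
      rw [show ((PiTensorProduct.tprod 𝔽 (Fin.append f g) :
          TensorPower 𝔽 (k + 1 + (l + 1)) (Module.Dual 𝔽 L)) : LPow 𝔽 L (Int.negSucc (k+1+l))) =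
        (∏ i, (Fin.append f g i) v) • uu 𝔽 L v β (Int.negSucc (k + 1 + l)) from hrhs]
      rw [cast_smul_u (show Int.negSucc (k + 1 + l) = Int.negSucc k + Int.negSucc l by
                rw [Int.negSucc_add_negSucc]; congr 1; omega)]
    congr 1
    show phiT 𝔽 (Module.Dual.eval 𝔽 L v) (k+1) (PiTensorProduct.tprod 𝔽 f) *
      phiT 𝔽 (Module.Dual.eval 𝔽 L v) (l+1) (PiTensorProduct.tprod 𝔽 g) = _
    rw [phiT_tprod, phiT_tprod]
    conv_rhs => rw [Fin.prod_univ_add]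
    simp [Fin.append_left, Fin.append_right]
  · -- pairing 1 ⊗ -1
    intro a α
    refine (mull_apply _ _ _ _).trans ?_
    rw [hone]
    show (phiT 𝔽 β 1 (PiTensorProduct.tprod 𝔽 fun _ => a) *
        phiT 𝔽 (Module.Dual.eval 𝔽 L v) 1 (PiTensorProduct.tprod 𝔽 fun _ => α)) •
        uu 𝔽 L v β (Int.ofNat 0) = α a • uu 𝔽 L v β 0
    rw [phiT_tprod, phiT_tprod]
    congr 1
    simp only [Fin.prod_univ_one, Module.Dual.eval_apply]
    conv_rhs => rw [hexp a]
    simp [mul_comm]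
  · -- pairing -1 ⊗ 1
    intro a α
    refine (mull_apply _ _ _ _).trans ?_
    rw [hone]
    show (phiT 𝔽 (Module.Dual.eval 𝔽 L v) 1 (PiTensorProduct.tprod 𝔽 fun _ => α) *
        phiT 𝔽 β 1 (PiTensorProduct.tprod 𝔽 fun _ => a)) •
        uu 𝔽 L v β (Int.ofNat 0) = α a • uu 𝔽 L v β 0
    rw [phiT_tprod, phiT_tprod]
    congr 1
    simp only [Fin.prod_univ_one, Module.Dual.eval_apply]
    conv_rhs => rw [hexp a]
    simp [mul_comm]
  · -- left unit
    intro n x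
    rw [mull_apply, hphione, one_mul]
    exact (heq_smul_u (zero_add n) _).trans (heq_of_eq (expand hexp n x).symm)
  · -- right unit
    intro n x
    rw [mull_apply, hphione, mul_one]
    exact (heq_smul_u (add_zero n) _).trans (heq_of_eq (expand hexp n x).symm)
  · -- associativity
    intro m n k x y z
    rw [mull_apply, mull_apply, mull_apply, mull_apply, map_smul, map_smul,
      smul_eq_mul, smul_eq_mul, phi_u hβv, phi_u hβv, mul_one, mul_one, mul_assoc]
    exact heq_smul_u (add_assoc m n k) _
  · -- commutativity
    intro m n x y
    rw [mull_apply, mull_apply, mul_comm]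
    exact heq_smul_u (add_comm m n) _
  · -- inverses
    intro n x hx
    have hphix : phi 𝔽 L v β n x ≠ 0 := by
      intro h
      apply hx
      rw [expand hexp n x, h, zero_smul]
    refine ⟨(phi 𝔽 L v β n x)⁻¹ • uu 𝔽 L v β (-n), ?_⟩
    rw [mull_apply, map_smul, smul_eq_mul, phi_u hβv, mul_one,
      mul_inv_cancel₀ hphix, cast_smul_u (add_neg_cancel n), hone, one_smul]
end

section
/- Let Δ be a derivation of a dimensioned ring R_G, i.e. a dimensioned additive map R → R covering a dimension map δ: G → G and satisfying the Leibniz identity Δ(r·s) = Δ(r)·s + r·Δ(s). Then the dimension map δ necessarily satisfies δ(gh) = δ(g)h = gδ(h) for all g, h ∈ G; hence δ is multiplication by the element δ(1) ∈ G. -/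
variable {G : Type*} [Monoid G]

/-- The total space of a dimensioned ring, i.e. the union of all slices. -/
def DimRing.Total (R : G → Type*) := (g : G) × R g

variable (R : G → Type*) [∀ g, AddCommGroup (R g)] [DimRing R]

instance : Monoid (DimRing.Total R) where
  mul x y := ⟨x.1 * y.1, DimRing.mul x.2 y.2⟩
  one := ⟨1, DimRing.one⟩
  mul_assoc x y z := Sigma.ext (mul_assoc x.1 y.1 z.1) (DimRing.mul_assoc x.2 y.2 z.2)
  one_mul x := Sigma.ext (one_mul x.1) (DimRing.one_mul x.2)
  mul_one x := Sigma.ext (mul_one x.1) (DimRing.mul_one x.2)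

/-- If `Δ` is a derivation of a dimensioned ring `R_G`, i.e. a map of the total space
covering a dimension map `δ : G → G`, additive on slices, and satisfying the Leibniz
identity `Δ(r·s) = Δ(r)·s + r·Δ(s)` (whose right-hand side in particular requires the two
summands to lie in the same slice), then necessarily `δ(gh) = δ(g)h = gδ(h)` for all
`g, h ∈ G`; hence `δ` is multiplication by the element `δ(1)`. -/
theorem stmt17 (Δ : DimRing.Total R → DimRing.Total R) (δ : G → G)
    (hcover : ∀ x : DimRing.Total R, (Δ x).1 = δ x.1)
    (hadd : ∀ (g : G) (a b : R g),
      Δ ⟨g, a + b⟩ = ⟨δ g, cast (congrArg R (hcover ⟨g, a⟩)) (Δ ⟨g, a⟩).2 +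
        cast (congrArg R (hcover ⟨g, b⟩)) (Δ ⟨g, b⟩).2⟩)
    (hleibniz : ∀ x y : DimRing.Total R,
      ∃ h : (Δ x * y).1 = (x * Δ y).1,
        Δ (x * y) = ⟨(x * Δ y).1, cast (congrArg R h) (Δ x * y).2 + (x * Δ y).2⟩) :
    (∀ g h : G, δ (g * h) = δ g * h ∧ δ (g * h) = g * δ h) ∧
    (∀ g : G, δ g = δ 1 * g) := by
  have key : ∀ g h : G, δ (g * h) = δ g * h ∧ δ (g * h) = g * δ h := by
    intro g h
    obtain ⟨heq, heq2⟩ := hleibniz ⟨g, 0⟩ ⟨h, 0⟩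
    have h1 : δ g * h = g * δ h := by
      have e : (Δ ⟨g, 0⟩).1 * h = g * (Δ ⟨h, 0⟩).1 := heq
      rwa [hcover ⟨g, 0⟩, hcover ⟨h, 0⟩] at e
    have h2 : δ (g * h) = g * δ h := by
      have e := congrArg Sigma.fst heq2
      rw [hcover] at e
      have e' : δ (g * h) = g * (Δ ⟨h, 0⟩).1 := e
      rwa [hcover ⟨h, 0⟩] at e'
    exact ⟨h2.trans h1.symm, h2⟩
  refine ⟨key, fun g => ?_⟩
  have := (key 1 g).1
  rwa [one_mul] at this
end

section
/- Let (A_G, *_p, {,}_b) be a dimensioned Poisson algebra over a commutative dimensioned ring R_H, and I ⊆ A_G a coisotrope. Let N(I) := {n ∈ A : {n, i} ∈ I for all i ∈ I} be the Lie idealizer. Then N(I) is closed under both * and {,}, I is an ideal in N(I) for both operations, and the subquotient N(I)/I inherits a dimensioned Poisson algebra structure with commutative product (n+I)*'(m+I) := n*m + I and bracket {n+I, m+I}' := {n,m} + I. -/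
/-- Transport of slices along an equality of dimensions. -/
def castSl {G : Type*} (A : G → Type*) {x y : G} (h : x = y) (a : A x) : A y :=
  cast (congrArg A h) a

/-- A dimensioned Poisson algebra: a dimensional abelian group `A_G` over a commutative
monoid `G` with a commutative associative product `*` of homogeneous dimension `p`
(taking `A_g × A_h → A_{pgh}`) and a Lie bracket `{,}` of homogeneous dimension `b`,
both additive in each slot, related by the Leibniz identity. -/
structure DimPoisson (G : Type*) [CommMonoid G] (A : G → Type*)
    [∀ g, AddCommGroup (A g)] (p b : G) where
  star : ∀ {g h : G}, A g → A h → A (p * g * h)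
  bracket : ∀ {g h : G}, A g → A h → A (b * g * h)
  star_addl : ∀ {g h : G} (x y : A g) (z : A h), star (x + y) z = star x z + star y z
  star_addr : ∀ {g h : G} (x : A g) (y z : A h), star x (y + z) = star x y + star x z
  bracket_addl : ∀ {g h : G} (x y : A g) (z : A h),
    bracket (x + y) z = bracket x z + bracket y z
  bracket_addr : ∀ {g h : G} (x : A g) (y z : A h),
    bracket x (y + z) = bracket x y + bracket x z
  star_comm : ∀ {g h : G} (x : A g) (y : A h), HEq (star x y) (star y x)
  star_assoc : ∀ {g h k : G} (x : A g) (y : A h) (z : A k),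
    HEq (star (star x y) z) (star x (star y z))
  bracket_antisymm : ∀ {g h : G} (x : A g) (y : A h), HEq (bracket x y) (-(bracket y x))
  jacobi : ∀ {g h k : G} (x : A g) (y : A h) (z : A k),
    bracket (bracket x y) z +
      castSl A (by ac_rfl) (bracket (bracket y z) x) +
      castSl A (by ac_rfl) (bracket (bracket z x) y) = 0
  leibniz : ∀ {g h k : G} (x : A g) (y : A h) (z : A k),
    bracket x (star y z) =
      castSl A (by ac_rfl) (star (bracket x y) z) +
      castSl A (by ac_rfl) (star y (bracket x z))

set_option linter.unusedVariables false

namespace DimRed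

theorem addhom_zero {δ γ : Type*} [AddGroup δ] [AddGroup γ] (f : δ → γ)
    (hf : ∀ x y, f (x + y) = f x + f y) : f 0 = 0 := by
  have := hf 0 0; rw [add_zero] at this; exact (left_eq_add.mp this)

theorem addhom_neg {δ γ : Type*} [AddGroup δ] [AddGroup γ] (f : δ → γ)
    (hf : ∀ x y, f (x + y) = f x + f y) (x : δ) : f (-x) = -(f x) := by
  have h := hf x (-x); rw [add_neg_cancel, addhom_zero f hf] at h
  exact (neg_eq_of_add_eq_zero_right h.symm).symm

theorem addhom_sub {δ γ : Type*} [AddGroup δ] [AddGroup γ] (f : δ → γ)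
    (hf : ∀ x y, f (x + y) = f x + f y) (x y : δ) : f (x - y) = f x - f y := by
  rw [sub_eq_add_neg, hf, addhom_neg f hf, sub_eq_add_neg]

section Aux
variable {G : Type*} [CommMonoid G] {A : G → Type*} [∀ g, AddCommGroup (A g)]
  {p b : G} (P : DimPoisson G A p b) (I : ∀ g, AddSubgroup (A g))

theorem castSl_mem {x y : G} (h : x = y) (a : A x) :
    castSl A h a ∈ I y ↔ a ∈ I x := by subst h; rfl

theorem mem_of_heq {x y : G} (h : x = y) {a : A x} {c : A y}
    (hac : HEq a c) (ha : a ∈ I x) : c ∈ I y := by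
  subst h; exact (eq_of_heq hac) ▸ ha

-- derived additivity lemmas
theorem star_zero_left {g h : G} (z : A h) : P.star (0 : A g) z = 0 :=
  addhom_zero (fun x => P.star x z) (fun x y => P.star_addl x y z)

theorem star_neg_left {g h : G} (x : A g) (z : A h) : P.star (-x) z = -(P.star x z) :=
  addhom_neg (fun x => P.star x z) (fun x y => P.star_addl x y z) x

theorem star_sub_left {g h : G} (x y : A g) (z : A h) :
    P.star (x - y) z = P.star x z - P.star y z :=
  addhom_sub (fun x => P.star x z) (fun x y => P.star_addl x y z) x y

theorem star_sub_right {g h : G} (x : A g) (y z : A h) :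
    P.star x (y - z) = P.star x y - P.star x z :=
  addhom_sub (fun y => P.star x y) (fun y z => P.star_addr x y z) y z

theorem bracket_zero_left {g h : G} (z : A h) : P.bracket (0 : A g) z = 0 :=
  addhom_zero (fun x => P.bracket x z) (fun x y => P.bracket_addl x y z)

theorem bracket_neg_left {g h : G} (x : A g) (z : A h) :
    P.bracket (-x) z = -(P.bracket x z) :=
  addhom_neg (fun x => P.bracket x z) (fun x y => P.bracket_addl x y z) x

theorem bracket_sub_left {g h : G} (x y : A g) (z : A h) :
    P.bracket (x - y) z = P.bracket x z - P.bracket y z :=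
  addhom_sub (fun x => P.bracket x z) (fun x y => P.bracket_addl x y z) x y

theorem bracket_sub_right {g h : G} (x : A g) (y z : A h) :
    P.bracket x (y - z) = P.bracket x y - P.bracket x z :=
  addhom_sub (fun y => P.bracket x y) (fun y z => P.bracket_addr x y z) y z

/-- The Lie idealizer of `I`. -/
def NId : ∀ g, AddSubgroup (A g) := fun g =>
  { carrier := {x | ∀ (h : G) (i : A h), i ∈ I h → P.bracket x i ∈ I (b * g * h)}
    add_mem' := by
      intro x y hx hy h i hi
      rw [P.bracket_addl]; exact add_mem (hx h i hi) (hy h i hi)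
    zero_mem' := by
      intro h i hi; rw [bracket_zero_left]; exact zero_mem _
    neg_mem' := by
      intro x hx h i hi; rw [bracket_neg_left]; exact neg_mem (hx h i hi) }

theorem mem_NId {g : G} (x : A g) : x ∈ NId P I g ↔
    ∀ (h : G) (i : A h), i ∈ I h → P.bracket x i ∈ I (b * g * h) := Iff.rfl


/-- `I` is also a left ideal for `*`. -/
theorem star_I_left
    (hIstar : ∀ {g h : G} (x : A g) (i : A h), i ∈ I h → P.star x i ∈ I (p * g * h))
    {g h : G} (i : A g) (x : A h) (hi : i ∈ I g) :
    P.star i x ∈ I (p * g * h) :=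
  mem_of_heq I (by ac_rfl : p * h * g = p * g * h) (P.star_comm i x).symm (hIstar x i hi)

/-- `{I, N} ⊆ I`. -/
theorem bracket_I_left {g h : G} (i : A g) (x : A h) (hi : i ∈ I g) (hx : x ∈ NId P I h) :
    P.bracket i x ∈ I (b * g * h) :=
  mem_of_heq I (by ac_rfl : b * h * g = b * g * h) (P.bracket_antisymm i x).symm
    (neg_mem (hx g i hi))

/-- `N` is closed under `*`. -/
theorem NId_star
    (hIstar : ∀ {g h : G} (x : A g) (i : A h), i ∈ I h → P.star x i ∈ I (p * g * h))
    {g h : G} (x : A g) (y : A h) (hx : x ∈ NId P I g) (hy : y ∈ NId P I h) :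
    P.star x y ∈ NId P I (p * g * h) := by
  intro k i hi
  refine mem_of_heq I (by ac_rfl : b * k * (p * g * h) = b * (p * g * h) * k)
    (P.bracket_antisymm (P.star x y) i).symm (neg_mem ?_)
  rw [P.leibniz i x y]
  refine add_mem ?_ ?_
  · rw [castSl_mem]
    exact star_I_left P I hIstar _ y (bracket_I_left P I i x hi hx)
  · rw [castSl_mem]
    exact hIstar x _ (bracket_I_left P I i y hi hy)

/-- `N` is closed under `{,}`. -/
theorem NId_bracket {g h : G} (x : A g) (y : A h) (hx : x ∈ NId P I g) (hy : y ∈ NId P I h) :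
    P.bracket x y ∈ NId P I (b * g * h) := by
  intro k i hi
  have hj := P.jacobi x y i
  have heq : P.bracket (P.bracket x y) i =
      -(castSl A (by ac_rfl) (P.bracket (P.bracket y i) x) +
        castSl A (by ac_rfl) (P.bracket (P.bracket i x) y)) := by
    refine eq_neg_of_add_eq_zero_left ?_
    rw [← add_assoc]; exact hj
  rw [heq]
  refine neg_mem (add_mem ?_ ?_)
  · rw [castSl_mem]
    exact bracket_I_left P I _ x (hy k i hi) hx
  · rw [castSl_mem]
    exact bracket_I_left P I _ y (bracket_I_left P I i x hi hx) hy

theorem I_subset_NId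
    (hIbr : ∀ {g h : G} (i : A g) (j : A h), i ∈ I g → j ∈ I h → P.bracket i j ∈ I (b * g * h))
    {g : G} (i : A g) (hi : i ∈ I g) : i ∈ NId P I g :=
  fun h j hj => hIbr i j hi hj

end Aux

section Quot
variable {G : Type*} [CommMonoid G] {A : G → Type*} [∀ g, AddCommGroup (A g)]
  {p b : G} (P : DimPoisson G A p b) (I : ∀ g, AddSubgroup (A g))

/-- Shorthand for the subtype of the idealizer. -/
abbrev NT (g : G) := (NId P I g : AddSubgroup (A g))

/-- The quotient slice. -/
abbrev Q (g : G) := NT P I g ⧸ (I g).addSubgroupOf (NT P I g)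

variable (hIstar : ∀ {g h : G} (x : A g) (i : A h), i ∈ I h → P.star x i ∈ I (p * g * h))

/-- `*` on idealizer elements. -/
def starN {g h : G} (n : NT P I g) (m : NT P I h) : NT P I (p * g * h) :=
  ⟨P.star (n : A g) (m : A h), NId_star P I hIstar (n : A g) (m : A h) n.2 m.2⟩

/-- `{,}` on idealizer elements. -/
def brN {g h : G} (n : NT P I g) (m : NT P I h) : NT P I (b * g * h) :=
  ⟨P.bracket (n : A g) (m : A h), NId_bracket P I (n : A g) (m : A h) n.2 m.2⟩

/-- cast on idealizer elements. -/
def castN {x y : G} (h : x = y) (a : NT P I x) : NT P I y :=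
  ⟨castSl A h (a : A x), by subst h; exact a.2⟩

theorem starN_rel {g h : G} (n n' : NT P I g) (m m' : NT P I h)
    (hn : (QuotientAddGroup.leftRel ((I g).addSubgroupOf (NT P I g))) n n')
    (hm : (QuotientAddGroup.leftRel ((I h).addSubgroupOf (NT P I h))) m m') :
    (QuotientAddGroup.leftRel ((I (p * g * h)).addSubgroupOf (NT P I (p * g * h))))
      (starN P I hIstar n m) (starN P I hIstar n' m') := by
  rw [QuotientAddGroup.leftRel_apply] at hn hm ⊢
  rw [AddSubgroup.mem_addSubgroupOf] at hn hm ⊢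
  push_cast at hn hm
  have hn' : ((n' : A g) - (n : A g)) ∈ I g := by rwa [← neg_add_eq_sub]
  have hm' : ((m' : A h) - (m : A h)) ∈ I h := by rwa [← neg_add_eq_sub]
  have key : ((-(starN P I hIstar n m) + starN P I hIstar n' m' :
      NT P I (p * g * h)) : A (p * g * h)) =
      P.star ((n' : A g) - (n : A g)) (m : A h) +
        P.star (n' : A g) ((m' : A h) - (m : A h)) := by
    push_cast [starN]
    rw [star_sub_left, star_sub_right]
    abel
  rw [key]
  exact add_mem (star_I_left P I hIstar _ _ hn') (hIstar _ _ hm')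

theorem brN_rel {g h : G} (n n' : NT P I g) (m m' : NT P I h)
    (hn : (QuotientAddGroup.leftRel ((I g).addSubgroupOf (NT P I g))) n n')
    (hm : (QuotientAddGroup.leftRel ((I h).addSubgroupOf (NT P I h))) m m') :
    (QuotientAddGroup.leftRel ((I (b * g * h)).addSubgroupOf (NT P I (b * g * h))))
      (brN P I n m) (brN P I n' m') := by
  rw [QuotientAddGroup.leftRel_apply] at hn hm ⊢
  rw [AddSubgroup.mem_addSubgroupOf] at hn hm ⊢
  push_cast at hn hm
  have hn' : ((n' : A g) - (n : A g)) ∈ I g := by rwa [← neg_add_eq_sub]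
  have hm' : ((m' : A h) - (m : A h)) ∈ I h := by rwa [← neg_add_eq_sub]
  have key : ((-(brN P I n m) + brN P I n' m' :
      NT P I (b * g * h)) : A (b * g * h)) =
      P.bracket ((n' : A g) - (n : A g)) (m : A h) +
        P.bracket (n' : A g) ((m' : A h) - (m : A h)) := by
    push_cast [brN]
    rw [bracket_sub_left, bracket_sub_right]
    abel
  rw [key]
  exact add_mem (bracket_I_left P I _ _ hn' m.2) (n'.2 h _ hm')

/-- `*` on the quotient. -/
def starQ {g h : G} (x : Q P I g) (y : Q P I h) : Q P I (p * g * h) :=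
  Quotient.map₂' (starN P I hIstar)
    (fun _ _ hn _ _ hm => starN_rel P I hIstar _ _ _ _ hn hm) x y

/-- `{,}` on the quotient. -/
def brQ {g h : G} (x : Q P I g) (y : Q P I h) : Q P I (b * g * h) :=
  Quotient.map₂' (brN P I) (fun _ _ hn _ _ hm => brN_rel P I _ _ _ _ hn hm) x y

theorem starQ_mk {g h : G} (n : NT P I g) (m : NT P I h) :
    starQ P I hIstar (QuotientAddGroup.mk n) (QuotientAddGroup.mk m) =
      QuotientAddGroup.mk (starN P I hIstar n m) := rfl

theorem brQ_mk {g h : G} (n : NT P I g) (m : NT P I h) :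
    brQ P I (QuotientAddGroup.mk n) (QuotientAddGroup.mk m) =
      QuotientAddGroup.mk (brN P I n m) := rfl

theorem heqQ {x y : G} (hxy : x = y) (a : NT P I x) (c : NT P I y)
    (h : HEq (a : A x) (c : A y)) :
    HEq (QuotientAddGroup.mk a : Q P I x) (QuotientAddGroup.mk c : Q P I y) := by
  subst hxy
  rw [Subtype.ext (eq_of_heq h)]

theorem castQ_mk {x y : G} (h : x = y) (a : NT P I x) :
    castSl (fun g => Q P I g) h (QuotientAddGroup.mk a) =
      QuotientAddGroup.mk (castN P I h a) := by
  subst h; rfl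

end Quot

section Struct
variable {G : Type*} [CommMonoid G] {A : G → Type*} [∀ g, AddCommGroup (A g)]
  {p b : G} (P : DimPoisson G A p b) (I : ∀ g, AddSubgroup (A g))
  (hIstar : ∀ {g h : G} (x : A g) (i : A h), i ∈ I h → P.star x i ∈ I (p * g * h))

theorem starN_addl {g h : G} (x y : NT P I g) (z : NT P I h) :
    starN P I hIstar (x + y) z = starN P I hIstar x z + starN P I hIstar y z := by
  apply Subtype.ext; push_cast [starN]; exact P.star_addl _ _ _

theorem starN_addr {g h : G} (x : NT P I g) (y z : NT P I h) :
    starN P I hIstar x (y + z) = starN P I hIstar x y + starN P I hIstar x z := by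
  apply Subtype.ext; push_cast [starN]; exact P.star_addr _ _ _

theorem brN_addl {g h : G} (x y : NT P I g) (z : NT P I h) :
    brN P I (x + y) z = brN P I x z + brN P I y z := by
  apply Subtype.ext; push_cast [brN]; exact P.bracket_addl _ _ _

theorem brN_addr {g h : G} (x : NT P I g) (y z : NT P I h) :
    brN P I x (y + z) = brN P I x y + brN P I x z := by
  apply Subtype.ext; push_cast [brN]; exact P.bracket_addr _ _ _

/-- The induced dimensioned Poisson structure on the subquotient `N(I)/I`. -/
def PQ : DimPoisson G (fun g => Q P I g) p b where
  star := fun x y => starQ P I hIstar x y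
  bracket := fun x y => brQ P I x y
  star_addl := by
    intro g h x y z
    refine QuotientAddGroup.induction_on x fun a => QuotientAddGroup.induction_on y fun c =>
      QuotientAddGroup.induction_on z fun d => ?_
    beta_reduce
    rw [← QuotientAddGroup.mk_add, starQ_mk, starQ_mk, starQ_mk, starN_addl,
      QuotientAddGroup.mk_add]
  star_addr := by
    intro g h x y z
    refine QuotientAddGroup.induction_on x fun a => QuotientAddGroup.induction_on y fun c =>
      QuotientAddGroup.induction_on z fun d => ?_
    beta_reduce
    rw [← QuotientAddGroup.mk_add, starQ_mk, starQ_mk, starQ_mk, starN_addr,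
      QuotientAddGroup.mk_add]
  bracket_addl := by
    intro g h x y z
    refine QuotientAddGroup.induction_on x fun a => QuotientAddGroup.induction_on y fun c =>
      QuotientAddGroup.induction_on z fun d => ?_
    beta_reduce
    rw [← QuotientAddGroup.mk_add, brQ_mk, brQ_mk, brQ_mk, brN_addl, QuotientAddGroup.mk_add]
  bracket_addr := by
    intro g h x y z
    refine QuotientAddGroup.induction_on x fun a => QuotientAddGroup.induction_on y fun c =>
      QuotientAddGroup.induction_on z fun d => ?_
    beta_reduce
    rw [← QuotientAddGroup.mk_add, brQ_mk, brQ_mk, brQ_mk, brN_addr, QuotientAddGroup.mk_add]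
  star_comm := by
    intro g h x y
    refine QuotientAddGroup.induction_on x fun a => QuotientAddGroup.induction_on y fun c => ?_
    beta_reduce
    rw [starQ_mk, starQ_mk]
    exact heqQ P I (by ac_rfl) _ _ (P.star_comm (a : A g) (c : A h))
  star_assoc := by
    intro g h k x y z
    refine QuotientAddGroup.induction_on x fun a => QuotientAddGroup.induction_on y fun c =>
      QuotientAddGroup.induction_on z fun d => ?_
    beta_reduce
    rw [starQ_mk, starQ_mk, starQ_mk, starQ_mk]
    exact heqQ P I (by ac_rfl) _ _ (P.star_assoc (a : A g) (c : A h) (d : A k))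
  bracket_antisymm := by
    intro g h x y
    refine QuotientAddGroup.induction_on x fun a => QuotientAddGroup.induction_on y fun c => ?_
    beta_reduce
    rw [brQ_mk, brQ_mk, ← QuotientAddGroup.mk_neg]
    exact heqQ P I (by ac_rfl) _ _ (P.bracket_antisymm (a : A g) (c : A h))
  jacobi := by
    intro g h k x y z
    refine QuotientAddGroup.induction_on x fun a => QuotientAddGroup.induction_on y fun c =>
      QuotientAddGroup.induction_on z fun d => ?_
    beta_reduce
    simp only [brQ_mk, castQ_mk, ← QuotientAddGroup.mk_add]
    rw [← QuotientAddGroup.mk_zero]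
    congr 1
    apply Subtype.ext
    push_cast [brN, castN]
    exact P.jacobi (a : A g) (c : A h) (d : A k)
  leibniz := by
    intro g h k x y z
    refine QuotientAddGroup.induction_on x fun a => QuotientAddGroup.induction_on y fun c =>
      QuotientAddGroup.induction_on z fun d => ?_
    beta_reduce
    simp only [starQ_mk, brQ_mk, castQ_mk, ← QuotientAddGroup.mk_add]
    congr 1
    apply Subtype.ext
    push_cast [brN, starN, castN]
    exact P.leibniz (a : A g) (c : A h) (d : A k)

end Struct

end DimRed

/-- Dimensioned Poisson reduction: for a coisotrope `I` of a dimensioned Poisson algebra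
`(A_G, *_p, {,}_b)` (a slice-wise subgroup that is an ideal for `*` and a Lie subalgebra
for `{,}`), the Lie idealizer `N(I) = {n : {n, I} ⊆ I}` is closed under both operations,
contains `I` as an ideal for both, and the subquotient `N(I)/I` inherits a dimensioned
Poisson algebra structure with `(n+I) *' (m+I) = n*m + I` and `{n+I, m+I}' = {n,m} + I`. -/
theorem stmt18 {G : Type*} [CommMonoid G] (A : G → Type*) [∀ g, AddCommGroup (A g)]
    (p b : G) (P : DimPoisson G A p b) (I : ∀ g, AddSubgroup (A g))
    (hIstar : ∀ {g h : G} (x : A g) (i : A h), i ∈ I h → P.star x i ∈ I (p * g * h))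
    (hIbr : ∀ {g h : G} (i : A g) (j : A h), i ∈ I g → j ∈ I h → P.bracket i j ∈ I (b * g * h)) :
    ∃ N : ∀ g, AddSubgroup (A g),
      -- `N` is the Lie idealizer of `I`:
      (∀ (g : G) (x : A g), x ∈ N g ↔
        ∀ (h : G) (i : A h), i ∈ I h → P.bracket x i ∈ I (b * g * h)) ∧
      -- `N` is closed under both multiplications:
      (∀ {g h : G} (x : A g) (y : A h), x ∈ N g → y ∈ N h → P.star x y ∈ N (p * g * h)) ∧
      (∀ {g h : G} (x : A g) (y : A h), x ∈ N g → y ∈ N h → P.bracket x y ∈ N (b * g * h)) ∧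
      -- `I ⊆ N` is an ideal for both multiplications:
      (∀ {g : G} (i : A g), i ∈ I g → i ∈ N g) ∧
      (∀ {g h : G} (n : A g) (i : A h), n ∈ N g → i ∈ I h →
        P.star n i ∈ I (p * g * h) ∧ P.bracket n i ∈ I (b * g * h)) ∧
      -- and the subquotient `N(I)/I` is a dimensioned Poisson algebra:
      ∃ P' : DimPoisson G (fun g => N g ⧸ (I g).addSubgroupOf (N g)) p b,
        ∀ {g h : G} (n : N g) (m : N h),
          (∃ hmem : P.star (n : A g) (m : A h) ∈ N (p * g * h),
            P'.star (QuotientAddGroup.mk n) (QuotientAddGroup.mk m) =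
              QuotientAddGroup.mk ⟨P.star (n : A g) (m : A h), hmem⟩) ∧
          (∃ hmem : P.bracket (n : A g) (m : A h) ∈ N (b * g * h),
            P'.bracket (QuotientAddGroup.mk n) (QuotientAddGroup.mk m) =
              QuotientAddGroup.mk ⟨P.bracket (n : A g) (m : A h), hmem⟩) := by
  refine ⟨DimRed.NId P I, fun g x => Iff.rfl, ?_, ?_, ?_, ?_, ?_⟩
  · intro g h x y hx hy
    exact DimRed.NId_star P I hIstar x y hx hy
  · intro g h x y hx hy
    exact DimRed.NId_bracket P I x y hx hy
  · intro g i hi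
    exact DimRed.I_subset_NId P I hIbr i hi
  · intro g h n i hn hi
    exact ⟨hIstar n i hi, hn h i hi⟩
  · refine ⟨DimRed.PQ P I hIstar, ?_⟩
    intro g h n m
    exact ⟨⟨(DimRed.starN P I hIstar n m).2, rfl⟩, ⟨(DimRed.brN P I n m).2, rfl⟩⟩
end

section
/- Let (A_G, *_p, {,}_b) and (B_G, *_q, {,}_c) be dimensioned Poisson algebras over a commutative dimensioned ring R_G with dimension monoid G, satisfying the compatibility condition bq = pc in G. Then the tensor product A_G ⊗_{R_G} B_G carries a dimensioned Poisson algebra structure with commutative product (a⊗b) * (a'⊗b') := (a *_p a') ⊗ (b *_q b') of dimension pq and Lie bracket {a⊗b, a'⊗b'} := {a,a'}_b ⊗ (b *_q b') + (a *_p a') ⊗ {b,b'}_c of dimension pc = bq; in particular both terms of the bracket lie in the same dimension slice. -/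
variable {G : Type*} [CommMonoid G] [DecidableEq G]
  (A : G → Type*) [∀ g, AddCommGroup (A g)] (B : G → Type*) [∀ g, AddCommGroup (B g)]

/-- The slice of dimension `g` of the tensor product `A ⊗ B` of two dimensioned modules
with dimension monoid `G`: the direct sum over factorizations `g = x·u` of the tensor
products `A_x ⊗ B_u`. -/
def TensorSlice (g : G) : Type _ :=
  DirectSum {su : G × G // su.1 * su.2 = g} (fun su => TensorProduct ℤ (A su.1.1) (B su.1.2))

noncomputable instance (g : G) : AddCommGroup (TensorSlice A B g) :=
  inferInstanceAs (AddCommGroup (DirectSum {su : G × G // su.1 * su.2 = g}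
    (fun su => TensorProduct ℤ (A su.1.1) (B su.1.2))))

/-- The elementary tensor `a ⊗ b` of homogeneous elements, in the slice of the product
dimension. -/
noncomputable def emb {x u : G} (a : A x) (b : B u) : TensorSlice A B (x * u) :=
  DirectSum.of (fun su : {su : G × G // su.1 * su.2 = x * u} =>
      TensorProduct ℤ (A su.1.1) (B su.1.2))
    (⟨(x, u), rfl⟩ : {su : G × G // su.1 * su.2 = x * u}) (a ⊗ₜ[ℤ] b)

namespace Stmt19

section Cast

variable {G : Type*} {A : G → Type*}

@[simp] theorem castSl_rfl {x : G} (a : A x) : castSl A rfl a = a := rfl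

theorem heq_castSl {x y : G} (h : x = y) (a : A x) : HEq (castSl A h a) a := by
  subst h; rfl

theorem castSl_eq_iff_heq {x y : G} (h : x = y) (a : A x) (a' : A y) :
    castSl A h a = a' ↔ HEq a a' := by
  subst h; exact ⟨heq_of_eq, eq_of_heq⟩

variable [DecidableEq G] [∀ g, AddCommGroup (A g)]

@[simp] theorem of_castSl {x y : G} (h : x = y) (a : A x) :
    DirectSum.of A y (castSl A h a) = DirectSum.of A x a := by subst h; rfl

theorem of_eq_of_heq {x y : G} (h : x = y) {a : A x} {a' : A y} (he : HEq a a') :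
    DirectSum.of A x a = DirectSum.of A y a' := by subst h; rw [eq_of_heq he]

end Cast

section GOp

variable {G : Type*} [CommMonoid G] [DecidableEq G] {A : G → Type*} [∀ g, AddCommGroup (A g)]

noncomputable def gop (m : G) (F : ∀ g h : G, A g →+ A h →+ A (m * g * h)) :
    DirectSum G A →+ DirectSum G A →+ DirectSum G A :=
  DirectSum.toAddMonoid fun g =>
    AddMonoidHom.mk'
      (fun x => DirectSum.toAddMonoid fun h => (DirectSum.of A (m * g * h)).comp (F g h x))
      (fun x y => DirectSum.addHom_ext fun h z => by
        simp [DirectSum.toAddMonoid_of, map_add])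

@[simp] theorem gop_of (m : G) (F : ∀ g h : G, A g →+ A h →+ A (m * g * h))
    (g h : G) (x : A g) (y : A h) :
    gop m F (DirectSum.of A g x) (DirectSum.of A h y)
      = DirectSum.of A (m * g * h) (F g h x y) := by
  simp [gop, DirectSum.toAddMonoid_of]

variable {p b : G} (PA : DimPoisson G A p b)

def sF : ∀ g h : G, A g →+ A h →+ A (p * g * h) := fun _ _ =>
  AddMonoidHom.mk' (fun x => AddMonoidHom.mk' (fun y => PA.star x y) (PA.star_addr x))
    (fun x y => AddMonoidHom.ext fun z => PA.star_addl x y z)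

def bF : ∀ g h : G, A g →+ A h →+ A (b * g * h) := fun _ _ =>
  AddMonoidHom.mk' (fun x => AddMonoidHom.mk' (fun y => PA.bracket x y) (PA.bracket_addr x))
    (fun x y => AddMonoidHom.ext fun z => PA.bracket_addl x y z)

noncomputable def gs : DirectSum G A →+ DirectSum G A →+ DirectSum G A := gop p (sF PA)

noncomputable def gb : DirectSum G A →+ DirectSum G A →+ DirectSum G A := gop b (bF PA)

@[simp] theorem gs_of (g h : G) (x : A g) (y : A h) :
    gs PA (DirectSum.of A g x) (DirectSum.of A h y)
      = DirectSum.of A (p * g * h) (PA.star x y) := by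
  simp [gs, sF]

@[simp] theorem gb_of (g h : G) (x : A g) (y : A h) :
    gb PA (DirectSum.of A g x) (DirectSum.of A h y)
      = DirectSum.of A (b * g * h) (PA.bracket x y) := by
  simp [gb, bF]

private theorem add3_zero {M : Type*} [SubtractionCommMonoid M] {a b c a' b' c' : M}
    (h1 : a + b + c = 0) (h2 : a' + b' + c' = 0) :
    a + a' + (b + b') + (c + c') = 0 := by
  have h3 : a + a' + (b + b') + (c + c') = a + b + c + (a' + b' + c') := by abel
  rw [h3, h1, h2, add_zero]

theorem gs_comm (X Y : DirectSum G A) : gs PA X Y = gs PA Y X := by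
  induction X using DirectSum.induction_on with
  | zero => simp
  | of g x =>
    induction Y using DirectSum.induction_on with
    | zero => simp
    | of h y =>
      rw [gs_of, gs_of]
      exact of_eq_of_heq (by ac_rfl) (PA.star_comm x y)
    | add Y1 Y2 ih1 ih2 => simp only [map_add, AddMonoidHom.add_apply, ih1, ih2]
  | add X1 X2 ih1 ih2 => simp only [map_add, AddMonoidHom.add_apply, ih1, ih2]

theorem gs_assoc (X Y Z : DirectSum G A) : gs PA (gs PA X Y) Z = gs PA X (gs PA Y Z) := by
  induction X using DirectSum.induction_on with
  | zero => simp
  | of g x =>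
    induction Y using DirectSum.induction_on with
    | zero => simp
    | of h y =>
      induction Z using DirectSum.induction_on with
      | zero => simp
      | of k z =>
        rw [gs_of, gs_of, gs_of, gs_of]
        exact of_eq_of_heq (by ac_rfl) (PA.star_assoc x y z)
      | add Z1 Z2 ih1 ih2 => simp only [map_add, AddMonoidHom.add_apply, ih1, ih2]
    | add Y1 Y2 ih1 ih2 => simp only [map_add, AddMonoidHom.add_apply, ih1, ih2]
  | add X1 X2 ih1 ih2 => simp only [map_add, AddMonoidHom.add_apply, ih1, ih2]

theorem gb_antisymm (X Y : DirectSum G A) : gb PA X Y = - gb PA Y X := by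
  induction X using DirectSum.induction_on with
  | zero => simp
  | of g x =>
    induction Y using DirectSum.induction_on with
    | zero => simp
    | of h y =>
      rw [gb_of, gb_of, ← map_neg]
      exact of_eq_of_heq (by ac_rfl) (PA.bracket_antisymm x y)
    | add Y1 Y2 ih1 ih2 =>
      simp only [map_add, AddMonoidHom.add_apply, ih1, ih2]; abel
  | add X1 X2 ih1 ih2 =>
    simp only [map_add, AddMonoidHom.add_apply, ih1, ih2]; abel

theorem gb_jacobi (X Y Z : DirectSum G A) :
    gb PA (gb PA X Y) Z + gb PA (gb PA Y Z) X + gb PA (gb PA Z X) Y = 0 := by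
  induction X using DirectSum.induction_on with
  | zero => simp
  | of g x =>
    induction Y using DirectSum.induction_on with
    | zero => simp
    | of h y =>
      induction Z using DirectSum.induction_on with
      | zero => simp
      | of k z =>
        have hj := congrArg (DirectSum.of A (b * (b * g * h) * k)) (PA.jacobi x y z)
        simp only [map_add, map_zero, of_castSl] at hj
        simpa using hj
      | add Z1 Z2 ih1 ih2 =>
        simp only [map_add, AddMonoidHom.add_apply]
        exact add3_zero ih1 ih2
    | add Y1 Y2 ih1 ih2 =>
      simp only [map_add, AddMonoidHom.add_apply]
      exact add3_zero ih1 ih2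
  | add X1 X2 ih1 ih2 =>
    simp only [map_add, AddMonoidHom.add_apply]
    exact add3_zero ih1 ih2

theorem gb_leibniz (X Y Z : DirectSum G A) :
    gb PA X (gs PA Y Z) = gs PA (gb PA X Y) Z + gs PA Y (gb PA X Z) := by
  induction X using DirectSum.induction_on with
  | zero => simp
  | of g x =>
    induction Y using DirectSum.induction_on with
    | zero => simp
    | of h y =>
      induction Z using DirectSum.induction_on with
      | zero => simp
      | of k z =>
        have hl := congrArg (DirectSum.of A (b * g * (p * h * k))) (PA.leibniz x y z)
        simp only [map_add, of_castSl] at hl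
        simpa using hl
      | add Z1 Z2 ih1 ih2 =>
        simp only [map_add, AddMonoidHom.add_apply, ih1, ih2]; abel
    | add Y1 Y2 ih1 ih2 =>
      simp only [map_add, AddMonoidHom.add_apply, ih1, ih2]; abel
  | add X1 X2 ih1 ih2 =>
    simp only [map_add, AddMonoidHom.add_apply, ih1, ih2]; abel

end GOp


/-- A commutative ring with a biadditive Poisson bracket. -/
structure BrRing (R : Type*) [NonUnitalCommRing R] where
  br : R →+ R →+ R
  anti : ∀ x y, br x y = - br y x
  jac : ∀ x y z, br (br x y) z + br (br y z) x + br (br z x) y = 0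
  leib : ∀ x y z, br x (y * z) = br x y * z + y * br x z

theorem BrRing.leib' {R : Type*} [NonUnitalCommRing R] (β : BrRing R) (x y z : R) :
    β.br (x * y) z = β.br x z * y + x * β.br y z := by
  rw [β.anti (x * y) z, β.leib z x y, neg_add, β.anti x z, β.anti y z]
  simp [neg_mul, mul_neg]

/-- Lift a bracket on a non-unital commutative ring to its unitization. -/
noncomputable def ubr {S : Type*} [NonUnitalCommRing S] (β : BrRing S) :
    Unitization ℤ S →+ Unitization ℤ S →+ Unitization ℤ S :=
  AddMonoidHom.mk'
    (fun x => ((Unitization.inrHom ℤ ℤ S).toAddMonoidHom).comp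
        ((β.br x.snd).comp ((Unitization.sndHom ℤ ℤ S).toAddMonoidHom)))
    (fun x y => AddMonoidHom.ext fun z => by
      show (Unitization.inr (β.br (x + y).snd z.snd) : Unitization ℤ S)
          = Unitization.inr (β.br x.snd z.snd) + Unitization.inr (β.br y.snd z.snd)
      rw [Unitization.snd_add, map_add, AddMonoidHom.add_apply, Unitization.inr_add])

@[simp] theorem ubr_apply {S : Type*} [NonUnitalCommRing S] (β : BrRing S)
    (x y : Unitization ℤ S) :
    ubr β x y = Unitization.inr (β.br x.snd y.snd) := rfl

/-- Lift a bracket on a non-unital commutative ring to its unitization. -/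
noncomputable def BrRing.unitize {S : Type*} [NonUnitalCommRing S] (β : BrRing S) :
    BrRing (Unitization ℤ S) where
  br := ubr β
  anti := fun x y => by
    simp only [ubr_apply, β.anti x.snd y.snd]
    simp
  jac := fun x y z => by
    simp only [ubr_apply, Unitization.snd_inr]
    rw [← Unitization.inr_add, ← Unitization.inr_add, β.jac, Unitization.inr_zero]
  leib := fun x y z => by
    simp only [ubr_apply]
    refine Unitization.ext ?_ ?_
    · simp
    · simp only [Unitization.snd_mul, Unitization.snd_inr, Unitization.fst_inr,
        Unitization.snd_add, zero_smul, zero_add, map_add, map_zsmul]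
      rw [β.leib]
      abel

theorem BrRing.unitize_br_inr {S : Type*} [NonUnitalCommRing S] (β : BrRing S) (x y : S) :
    β.unitize.br (Unitization.inr x) (Unitization.inr y) = Unitization.inr (β.br x y) := by
  show ubr β _ _ = _
  simp

section Tensor

variable {R₁ R₂ : Type*} [CommRing R₁] [CommRing R₂]

def toLin2 {M N P : Type*} [AddCommGroup M] [AddCommGroup N] [AddCommGroup P]
    (f : M →+ N →+ P) : M →ₗ[ℤ] N →ₗ[ℤ] P where
  toFun x := (f x).toIntLinearMap
  map_add' x y := by ext z; simp [map_add, AddMonoidHom.add_apply]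
  map_smul' n x := by ext z; simp [map_zsmul]

@[simp] theorem toLin2_apply {M N P : Type*} [AddCommGroup M] [AddCommGroup N] [AddCommGroup P]
    (f : M →+ N →+ P) (x : M) (y : N) : toLin2 f x y = f x y := rfl

noncomputable def mulL (R : Type*) [NonUnitalCommRing R] : R →ₗ[ℤ] R →ₗ[ℤ] R :=
  toLin2 AddMonoidHom.mul

@[simp] theorem mulL_apply {R : Type*} [NonUnitalCommRing R] (x y : R) :
    mulL R x y = x * y := rfl

variable (β₁ : BrRing R₁) (β₂ : BrRing R₂)

noncomputable def LB : TensorProduct ℤ R₁ R₂ →ₗ[ℤ] TensorProduct ℤ R₁ R₂ →ₗ[ℤ] TensorProduct ℤ R₁ R₂ :=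
  TensorProduct.map₂ (toLin2 β₁.br) (mulL R₂) + TensorProduct.map₂ (mulL R₁) (toLin2 β₂.br)

@[simp] theorem LB_tmul (x y : R₁) (μ ν : R₂) :
    LB β₁ β₂ (x ⊗ₜ[ℤ] μ) (y ⊗ₜ[ℤ] ν) = β₁.br x y ⊗ₜ[ℤ] (μ * ν) + (x * y) ⊗ₜ[ℤ] β₂.br μ ν := by
  rfl

theorem LB_anti (X Y : TensorProduct ℤ R₁ R₂) : LB β₁ β₂ X Y = - LB β₁ β₂ Y X := by
  induction X using TensorProduct.induction_on with
  | zero => simp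
  | add X1 X2 ih1 ih2 => simp only [map_add, LinearMap.add_apply, ih1, ih2]; abel
  | tmul x μ =>
    induction Y using TensorProduct.induction_on with
    | zero => simp
    | add Y1 Y2 ih1 ih2 => simp only [map_add, LinearMap.add_apply, ih1, ih2]; abel
    | tmul y ν =>
      rw [LB_tmul, LB_tmul, β₁.anti x y, β₂.anti μ ν, mul_comm y x, mul_comm ν μ]
      simp only [TensorProduct.neg_tmul, TensorProduct.tmul_neg]
      abel

set_option maxHeartbeats 1000000 in
theorem LB_jac (X Y Z : TensorProduct ℤ R₁ R₂) :
    LB β₁ β₂ (LB β₁ β₂ X Y) Z + LB β₁ β₂ (LB β₁ β₂ Y Z) X + LB β₁ β₂ (LB β₁ β₂ Z X) Y = 0 := by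
  have add3 : ∀ {a b c a' b' c' : TensorProduct ℤ R₁ R₂},
      a + b + c = 0 → a' + b' + c' = 0 → a + a' + (b + b') + (c + c') = 0 := by
    intro a b c a' b' c' h1 h2
    have h3 : a + a' + (b + b') + (c + c') = a + b + c + (a' + b' + c') := by abel
    rw [h3, h1, h2, add_zero]
  induction X using TensorProduct.induction_on with
  | zero => simp
  | add X1 X2 ih1 ih2 =>
    simp only [map_add, LinearMap.add_apply]; exact add3 ih1 ih2
  | tmul x μ =>
    induction Y using TensorProduct.induction_on with
    | zero => simp
    | add Y1 Y2 ih1 ih2 =>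
      simp only [map_add, LinearMap.add_apply]; exact add3 ih1 ih2
    | tmul y ν =>
      induction Z using TensorProduct.induction_on with
      | zero => simp
      | add Z1 Z2 ih1 ih2 =>
        simp only [map_add, LinearMap.add_apply]; exact add3 ih1 ih2
      | tmul z ξ =>
        set L : R₁ →ₐ[ℤ] TensorProduct ℤ R₁ R₂ := Algebra.TensorProduct.includeLeft with hL
        set R : R₂ →ₐ[ℤ] TensorProduct ℤ R₁ R₂ := Algebra.TensorProduct.includeRight with hR
        have hLR : ∀ (s : R₁) (t : R₂), (s ⊗ₜ[ℤ] t : TensorProduct ℤ R₁ R₂) = L s * R t := by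
          intro s t
          simp [hL, hR, Algebra.TensorProduct.tmul_mul_tmul]
        simp only [LB_tmul, map_add, LinearMap.add_apply, LB_tmul]
        simp only [hLR, map_mul]
        have HJ1 := congrArg L (β₁.jac x y z)
        have HJ2 := congrArg R (β₂.jac μ ν ξ)
        have HLa1 := congrArg L (β₁.leib' x y z)
        have HLa2 := congrArg L (β₁.leib' y z x)
        have HLa3 := congrArg L (β₁.leib' z x y)
        have HRa1 := congrArg R (β₂.leib' μ ν ξ)
        have HRa2 := congrArg R (β₂.leib' ν ξ μ)
        have HRa3 := congrArg R (β₂.leib' ξ μ ν)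
        have HA1 := congrArg L (β₁.anti x z)
        have HA2 := congrArg L (β₁.anti y x)
        have HA3 := congrArg L (β₁.anti z y)
        have HB1 := congrArg R (β₂.anti μ ξ)
        have HB2 := congrArg R (β₂.anti ν μ)
        have HB3 := congrArg R (β₂.anti ξ ν)
        simp only [map_add, map_mul, map_zero, map_neg] at HJ1 HJ2 HLa1 HLa2 HLa3 HRa1 HRa2 HRa3 HA1 HA2 HA3 HB1 HB2 HB3
        linear_combination (R μ * R ν * R ξ) * HJ1 + (L x * L y * L z) * HJ2
          + (L (β₁.br x y) * L z) * HRa1 + (L (β₁.br y z) * L x) * HRa2 + (L (β₁.br z x) * L y) * HRa3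
          + (R (β₂.br μ ν) * R ξ) * HLa1 + (R (β₂.br ν ξ) * R μ) * HLa2 + (R (β₂.br ξ μ) * R ν) * HLa3
          + (L (β₁.br x y) * L z * R ν) * HB1 + (L (β₁.br y z) * L x * R ξ) * HB2 + (L (β₁.br z x) * L y * R μ) * HB3
          + (L y * R (β₂.br μ ν) * R ξ) * HA1 + (L z * R (β₂.br ν ξ) * R μ) * HA2 + (L x * R (β₂.br ξ μ) * R ν) * HA3

theorem LB_leib (X Y Z : TensorProduct ℤ R₁ R₂) :
    LB β₁ β₂ X (Y * Z) = LB β₁ β₂ X Y * Z + Y * LB β₁ β₂ X Z := by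
  induction X using TensorProduct.induction_on with
  | zero => simp
  | add X1 X2 ih1 ih2 =>
    simp only [map_add, LinearMap.add_apply, ih1, ih2]; ring
  | tmul x μ =>
    induction Y using TensorProduct.induction_on with
    | zero => simp
    | add Y1 Y2 ih1 ih2 =>
      simp only [map_add, LinearMap.add_apply, add_mul, mul_add, ih1, ih2]; ring
    | tmul y ν =>
      induction Z using TensorProduct.induction_on with
      | zero => simp
      | add Z1 Z2 ih1 ih2 =>
        simp only [map_add, LinearMap.add_apply, add_mul, mul_add, ih1, ih2]; ring
      | tmul z ξ =>
        set L : R₁ →ₐ[ℤ] TensorProduct ℤ R₁ R₂ := Algebra.TensorProduct.includeLeft with hL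
        set R : R₂ →ₐ[ℤ] TensorProduct ℤ R₁ R₂ := Algebra.TensorProduct.includeRight with hR
        have hLR : ∀ (s : R₁) (t : R₂), (s ⊗ₜ[ℤ] t : TensorProduct ℤ R₁ R₂) = L s * R t := by
          intro s t
          simp [hL, hR, Algebra.TensorProduct.tmul_mul_tmul]
        rw [Algebra.TensorProduct.tmul_mul_tmul]
        simp only [LB_tmul]
        simp only [hLR, map_mul]
        have H1 := congrArg L (β₁.leib x y z)
        have H2 := congrArg R (β₂.leib μ ν ξ)
        simp only [map_add, map_mul] at H1 H2
        linear_combination (R μ * R ν * R ξ) * H1 + (L x * L y * L z) * H2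

end Tensor

end Stmt19

namespace Stmt19

section Ring

variable {G : Type*} [CommMonoid G] [DecidableEq G] {A : G → Type*} [∀ g, AddCommGroup (A g)]
variable {p b : G}

noncomputable def GAring (PA : DimPoisson G A p b) : NonUnitalCommRing (DirectSum G A) :=
  { (inferInstance : AddCommGroup (DirectSum G A)) with
    mul := fun x y => gs PA x y
    left_distrib := fun x y z => map_add (gs PA x) y z
    right_distrib := fun x y z => by
      show gs PA (x + y) z = gs PA x z + gs PA y z
      rw [map_add]; rfl
    zero_mul := fun x => by
      show gs PA 0 x = 0
      rw [map_zero]; rfl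
    mul_zero := fun x => map_zero (gs PA x)
    mul_assoc := gs_assoc PA
    mul_comm := gs_comm PA }

attribute [reducible] GAring

noncomputable def gBr (PA : DimPoisson G A p b) : @BrRing (DirectSum G A) (GAring PA) :=
  letI := GAring PA
  { br := gb PA
    anti := gb_antisymm PA
    jac := gb_jacobi PA
    leib := fun x y z => gb_leibniz PA x y z }

end Ring

section Slice

variable {G : Type*} [CommMonoid G] [DecidableEq G]
  {A : G → Type*} [∀ g, AddCommGroup (A g)] {B : G → Type*} [∀ g, AddCommGroup (B g)]

theorem castSl_emb {x u D : G} (h : x * u = D) (a : A x) (b : B u) :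
    castSl (TensorSlice A B) h (emb A B a b)
      = DirectSum.of (fun su : {su : G × G // su.1 * su.2 = D} =>
          TensorProduct ℤ (A su.1.1) (B su.1.2)) ⟨(x, u), h⟩ (a ⊗ₜ[ℤ] b) := by
  subst h; rfl

/-- Induction principle for slices of the tensor product. -/
theorem TensorSlice.ind {g : G} {P : TensorSlice A B g → Prop} (h0 : P 0)
    (he : ∀ (x u : G) (hxu : x * u = g) (a : A x) (b : B u),
      P (castSl (TensorSlice A B) hxu (emb A B a b)))
    (ha : ∀ s t, P s → P t → P (s + t)) (s : TensorSlice A B g) : P s := by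
  induction s using DirectSum.induction_on with
  | zero => exact h0
  | add s t ihs iht => exact ha s t ihs iht
  | of i t =>
    obtain ⟨⟨x, u⟩, hxu⟩ := i
    induction t using TensorProduct.induction_on with
    | zero => simp only [map_zero]; exact h0
    | tmul a b' =>
      have := he x u hxu a b'
      rwa [castSl_emb] at this
    | add t1 t2 ih1 ih2 =>
      rw [map_add]; exact ha _ _ ih1 ih2

/-- The bilinear operation on slices induced by bilinear families on the factors. -/
noncomputable def tmap (m n : G)
    (FA : ∀ g h : G, A g →+ A h →+ A (m * g * h))
    (FB : ∀ g h : G, B g →+ B h →+ B (n * g * h)) (g h : G) :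
    TensorSlice A B g →+ TensorSlice A B h →+ TensorSlice A B (m * n * g * h) :=
  DirectSum.toAddMonoid fun su =>
    AddMonoidHom.mk'
      (fun t => DirectSum.toAddMonoid fun tv =>
        ((((TensorProduct.map₂ (toLin2 (FA su.1.1 tv.1.1)) (toLin2 (FB su.1.2 tv.1.2))).compr₂
            (DirectSum.lof ℤ {su : G × G // su.1 * su.2 = m * n * g * h}
              (fun su => TensorProduct ℤ (A su.1.1) (B su.1.2))
              ⟨(m * su.1.1 * tv.1.1, n * su.1.2 * tv.1.2), by
                obtain ⟨⟨x, u⟩, hxu⟩ := su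
                obtain ⟨⟨y, v⟩, hyv⟩ := tv
                subst hxu; subst hyv; dsimp only; ac_rfl⟩)) t).toAddMonoidHom))
      (fun t t' => DirectSum.addHom_ext fun tv w => by
        erw [AddMonoidHom.add_apply, DirectSum.toAddMonoid_of, DirectSum.toAddMonoid_of,
          DirectSum.toAddMonoid_of]
        rw [map_add]
        rfl)

theorem tmap_emb (m n : G)
    (FA : ∀ g h : G, A g →+ A h →+ A (m * g * h))
    (FB : ∀ g h : G, B g →+ B h →+ B (n * g * h))
    {x u y v : G} (a : A x) (b : B u) (a' : A y) (b' : B v) :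
    tmap m n FA FB (x * u) (y * v) (emb A B a b) (emb A B a' b')
      = castSl (TensorSlice A B) (by ac_rfl : m * x * y * (n * u * v) = m * n * (x * u) * (y * v))
          (emb A B (FA x y a a') (FB u v b b')) := by
  rw [castSl_emb]
  rw [tmap, emb]
  erw [DirectSum.toAddMonoid_of]
  show DirectSum.toAddMonoid _ (emb A B a' b') = _
  rw [emb]
  erw [DirectSum.toAddMonoid_of]
  rfl

/-- Transport along an equality of dimensions, as an additive map. -/
noncomputable def csHom {D D' : G} (h : D = D') : TensorSlice A B D →+ TensorSlice A B D' :=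
  AddMonoidHom.mk' (castSl (TensorSlice A B) h) (by subst h; intro s t; rfl)

@[simp] theorem csHom_apply {D D' : G} (h : D = D') (s : TensorSlice A B D) :
    csHom h s = castSl (TensorSlice A B) h s := rfl

noncomputable def comp₂ {X Y : Type*} [AddCommGroup X] [AddCommGroup Y]
    {S T : Type*} [AddCommGroup S] [AddCommGroup T]
    (f : X →+ Y) (F : S →+ T →+ X) : S →+ T →+ Y :=
  AddMonoidHom.mk' (fun s => f.comp (F s))
    (fun s s' => by ext t; simp [map_add, AddMonoidHom.add_apply])

@[simp] theorem comp₂_apply {X Y : Type*} [AddCommGroup X] [AddCommGroup Y]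
    {S T : Type*} [AddCommGroup S] [AddCommGroup T]
    (f : X →+ Y) (F : S →+ T →+ X) (s : S) (t : T) :
    comp₂ f F s t = f (F s t) := rfl

end Slice

section Iota

variable {G : Type*} [CommMonoid G] [DecidableEq G]
  {A : G → Type*} [∀ g, AddCommGroup (A g)] {B : G → Type*} [∀ g, AddCommGroup (B g)]

noncomputable def iot1 (D : G) :
    TensorSlice A B D →+ DirectSum (G × G) (fun i => TensorProduct ℤ (A i.1) (B i.2)) :=
  DirectSum.toAddMonoid fun su =>
    DirectSum.of (fun i : G × G => TensorProduct ℤ (A i.1) (B i.2)) su.1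

noncomputable def rho (D : G) :
    DirectSum (G × G) (fun i => TensorProduct ℤ (A i.1) (B i.2)) →+ TensorSlice A B D :=
  DirectSum.toAddMonoid fun i =>
    if h : i.1 * i.2 = D then
      DirectSum.of (fun su : {su : G × G // su.1 * su.2 = D} =>
        TensorProduct ℤ (A su.1.1) (B su.1.2)) ⟨i, h⟩
    else 0

theorem iot1_leftInv (D : G) : Function.LeftInverse (rho (A := A) (B := B) D) (iot1 D) := by
  intro s
  induction s using DirectSum.induction_on with
  | zero => exact (congrArg (rho D) (map_zero (iot1 (A := A) (B := B) D))).trans (map_zero _)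
  | add s t ihs iht =>
    exact (congrArg (rho D) (map_add (iot1 (A := A) (B := B) D) s t)).trans
      ((map_add _ _ _).trans (congrArg₂ (fun a b => a + b) ihs iht))
  | of su t =>
    obtain ⟨i, hi⟩ := su
    rw [iot1]
    erw [DirectSum.toAddMonoid_of]
    rw [rho]
    erw [DirectSum.toAddMonoid_of]
    exact congrArg (fun f : TensorProduct ℤ (A i.1) (B i.2) →+ TensorSlice A B D => f t) (dif_pos hi)

noncomputable def gaTen :
    (TensorProduct ℤ (DirectSum G A) (DirectSum G B)) ≃ₗ[ℤ]
      DirectSum (G × G) (fun i => TensorProduct ℤ (A i.1) (B i.2)) :=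
  TensorProduct.directSum ℤ ℤ (fun g => A g) (fun g => B g)

noncomputable def phi :
    TensorProduct ℤ (DirectSum G A) (DirectSum G B) →ₗ[ℤ]
      TensorProduct ℤ (Unitization ℤ (DirectSum G A)) (Unitization ℤ (DirectSum G B)) :=
  TensorProduct.map (Unitization.inrHom ℤ ℤ (DirectSum G A)) (Unitization.inrHom ℤ ℤ (DirectSum G B))

theorem phi_inj : Function.Injective (phi (A := A) (B := B)) := by
  have key : (TensorProduct.map (Unitization.sndHom ℤ ℤ (DirectSum G A))
        (Unitization.sndHom ℤ ℤ (DirectSum G B))).comp (phi (A := A) (B := B))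
      = LinearMap.id := by
    refine TensorProduct.ext' fun x y => rfl
  intro s t hst
  have := congrArg (TensorProduct.map (Unitization.sndHom ℤ ℤ (DirectSum G A))
    (Unitization.sndHom ℤ ℤ (DirectSum G B))) hst
  exact (LinearMap.congr_fun key s).symm.trans (this.trans (LinearMap.congr_fun key t))

/-- The canonical additive embedding of a tensor slice into the tensor product of
unitizations of the total spaces. -/
noncomputable def iot (D : G) :
    TensorSlice A B D →+
      TensorProduct ℤ (Unitization ℤ (DirectSum G A)) (Unitization ℤ (DirectSum G B)) :=
  ((phi.comp gaTen.symm.toLinearMap).toAddMonoidHom).comp (iot1 D)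

theorem iot_inj (D : G) : Function.Injective (iot (A := A) (B := B) D) := by
  intro s t hst
  have hst' : phi (gaTen.symm (iot1 (A := A) (B := B) D s))
      = phi (gaTen.symm (iot1 (A := A) (B := B) D t)) := hst
  exact (iot1_leftInv D).injective (gaTen.symm.injective (phi_inj hst'))

@[simp] theorem iot_cast {D D' : G} (h : D = D') (s : TensorSlice A B D) :
    iot D' (castSl (TensorSlice A B) h s) = iot D s := by subst h; rfl

theorem iot_emb {x u : G} (a : A x) (b : B u) :
    iot (x * u) (emb A B a b)
      = (Unitization.inr (DirectSum.of A x a)) ⊗ₜ[ℤ] (Unitization.inr (DirectSum.of B u b)) := by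
  have h1 : iot1 (A := A) (B := B) (x * u) (emb A B a b)
      = DirectSum.of (fun i : G × G => TensorProduct ℤ (A i.1) (B i.2)) (x, u) (a ⊗ₜ[ℤ] b) := by
    rw [emb, iot1]
    erw [DirectSum.toAddMonoid_of]
  have h2 : gaTen.symm (DirectSum.of (fun i : G × G => TensorProduct ℤ (A i.1) (B i.2)) (x, u)
        (a ⊗ₜ[ℤ] b))
      = (DirectSum.of A x a) ⊗ₜ[ℤ] (DirectSum.of B u b) := by
    rw [LinearEquiv.symm_apply_eq, gaTen]
    have := TensorProduct.directSum_lof_tmul_lof ℤ ℤ (M₁ := fun g => A g) (M₂ := fun g => B g)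
      x a u b
    simp only [DirectSum.lof_eq_of] at this; exact this.symm
  show phi (gaTen.symm (iot1 (x * u) (emb A B a b))) = _
  rw [h1, h2]
  rfl

end Iota

end Stmt19


namespace Stmt19

section Cast2
variable {G : Type*} {A : G → Type*}

theorem castSl_castSl {x y z : G} (h1 : x = y) (h2 : y = z) (a : A x) :
    castSl A h2 (castSl A h1 a) = castSl A (h1.trans h2) a := by
  subst h1; subst h2; rfl

end Cast2

section Ops

variable {G : Type*} [CommMonoid G] [DecidableEq G]
  {A : G → Type*} [∀ g, AddCommGroup (A g)] {B : G → Type*} [∀ g, AddCommGroup (B g)]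
  {p b q c : G}

noncomputable def tstar (PA : DimPoisson G A p b) (PB : DimPoisson G B q c) (g h : G) :
    TensorSlice A B g →+ TensorSlice A B h →+ TensorSlice A B (p * q * g * h) :=
  tmap p q (sF PA) (sF PB) g h

noncomputable def tbrk (PA : DimPoisson G A p b) (PB : DimPoisson G B q c)
    (hcomp : b * q = p * c) (g h : G) :
    TensorSlice A B g →+ TensorSlice A B h →+ TensorSlice A B (p * c * g * h) :=
  comp₂ (csHom (show b * q * g * h = p * c * g * h by rw [hcomp]))
      (tmap b q (bF PA) (sF PB) g h)
    + tmap p c (sF PA) (bF PB) g h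

theorem tstar_emb (PA : DimPoisson G A p b) (PB : DimPoisson G B q c)
    {x u y v : G} (a : A x) (b₀ : B u) (a' : A y) (b' : B v) :
    tstar PA PB (x * u) (y * v) (emb A B a b₀) (emb A B a' b')
      = castSl (TensorSlice A B)
          (by ac_rfl : p * x * y * (q * u * v) = p * q * (x * u) * (y * v))
          (emb A B (PA.star a a') (PB.star b₀ b')) :=
  tmap_emb p q (sF PA) (sF PB) a b₀ a' b'

theorem tbrk_emb (PA : DimPoisson G A p b) (PB : DimPoisson G B q c)
    (hcomp : b * q = p * c)
    {x u y v : G} (a : A x) (b₀ : B u) (a' : A y) (b' : B v) :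
    tbrk PA PB hcomp (x * u) (y * v) (emb A B a b₀) (emb A B a' b')
      = castSl (TensorSlice A B)
          ((show b * x * y * (q * u * v) = b * q * (x * u) * (y * v) by ac_rfl).trans
            (show b * q * (x * u) * (y * v) = p * c * (x * u) * (y * v) by rw [hcomp]))
          (emb A B (PA.bracket a a') (PB.star b₀ b'))
        + castSl (TensorSlice A B)
          (by ac_rfl : p * x * y * (c * u * v) = p * c * (x * u) * (y * v))
          (emb A B (PA.star a a') (PB.bracket b₀ b')) := by
  show csHom (show b * q * (x * u) * (y * v) = p * c * (x * u) * (y * v) by rw [hcomp])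
      (tmap b q (bF PA) (sF PB) (x * u) (y * v) (emb A B a b₀) (emb A B a' b'))
      + tmap p c (sF PA) (bF PB) (x * u) (y * v) (emb A B a b₀) (emb A B a' b') = _
  rw [tmap_emb b q (bF PA) (sF PB) a b₀ a' b', tmap_emb p c (sF PA) (bF PB) a b₀ a' b',
    csHom_apply, castSl_castSl]
  rfl

end Ops

end Stmt19

open Stmt19

set_option maxHeartbeats 2000000
set_option synthInstance.maxHeartbeats 400000

/-- Homogeneous dimensioned Poisson product: given dimensioned Poisson algebras
`(A_G, *_p, {,}_b)` and `(B_G, *_q, {,}_c)` over the same commutative dimension monoid `G`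
with `bq = pc`, the tensor product `A ⊗ B` carries a dimensioned Poisson structure of
product dimension `pq` and bracket dimension `pc = bq`, with
`(a⊗b) * (a'⊗b') = (a *_p a') ⊗ (b *_q b')` and
`{a⊗b, a'⊗b'} = {a,a'}_b ⊗ (b *_q b') + (a *_p a') ⊗ {b,b'}_c`; in particular both terms
of the bracket lie in the same dimension slice. -/
theorem stmt19 (p b q c : G) (PA : DimPoisson G A p b) (PB : DimPoisson G B q c)
    (hcomp : b * q = p * c) :
    ∃ P' : DimPoisson G (TensorSlice A B) (p * q) (p * c),
      ∀ {x y u v : G} (a : A x) (a' : A y) (b₀ : B u) (b' : B v),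
        (P'.star (emb A B a b₀) (emb A B a' b') =
          castSl (TensorSlice A B) (by ac_rfl) (emb A B (PA.star a a') (PB.star b₀ b'))) ∧
        (P'.bracket (emb A B a b₀) (emb A B a' b') =
          castSl (TensorSlice A B)
              (by calc b * x * y * (q * u * v) = b * q * (x * y * (u * v)) := by ac_rfl
                    _ = p * c * (x * y * (u * v)) := by rw [hcomp]
                    _ = p * c * (x * u) * (y * v) := by ac_rfl)
              (emb A B (PA.bracket a a') (PB.star b₀ b')) +
            castSl (TensorSlice A B) (by ac_rfl)
              (emb A B (PA.star a a') (PB.bracket b₀ b'))) := by 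
  letI rA : NonUnitalCommRing (DirectSum G A) := GAring PA
  letI rB : NonUnitalCommRing (DirectSum G B) := GAring PB
  let βA : BrRing (Unitization ℤ (DirectSum G A)) := (gBr PA).unitize
  let βB : BrRing (Unitization ℤ (DirectSum G B)) := (gBr PB).unitize
  letI : CommRing (TensorProduct ℤ (Unitization ℤ (DirectSum G A)) (Unitization ℤ (DirectSum G B))) :=
    Algebra.TensorProduct.instCommRing (R := ℤ) (A := Unitization ℤ (DirectSum G A))
      (B := Unitization ℤ (DirectSum G B))
  -- equivariance of `iot` for the star operation
  have key_s : ∀ (g h : G) (X : TensorSlice A B g) (Y : TensorSlice A B h),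
      iot (p * q * g * h) (tstar PA PB g h X Y) = iot g X * iot h Y := by
    intro g h X Y
    refine TensorSlice.ind
      (P := fun X => iot (p * q * g * h) (tstar PA PB g h X Y) = iot g X * iot h Y)
      ?_ (fun x u hxu a b₀ => ?_) (fun s t ihs iht => ?_) X
    · simp only [map_zero, AddMonoidHom.zero_apply, zero_mul]
    swap
    · simp only [map_add, AddMonoidHom.add_apply, ihs, iht, add_mul]
    · subst hxu
      rw [castSl_rfl]
      refine TensorSlice.ind
        (P := fun Y => iot (p * q * (x * u) * h) (tstar PA PB (x * u) h (emb A B a b₀) Y)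
          = iot (x * u) (emb A B a b₀) * iot h Y)
        ?_ (fun y v hyv a' b' => ?_) (fun s t ihs iht => ?_) Y
      · simp only [map_zero, AddMonoidHom.zero_apply, mul_zero]
      swap
      · simp only [map_add, ihs, iht, mul_add]
      · subst hyv
        rw [castSl_rfl]
        have hA : DirectSum.of A x a * DirectSum.of A y a'
            = DirectSum.of A (p * x * y) (PA.star a a') := gs_of PA x y a a'
        have hB : DirectSum.of B u b₀ * DirectSum.of B v b'
            = DirectSum.of B (q * u * v) (PB.star b₀ b') := gs_of PB u v b₀ b'
        rw [tstar_emb, iot_cast, iot_emb, iot_emb, iot_emb,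
          Algebra.TensorProduct.tmul_mul_tmul, ← Unitization.inr_mul, ← Unitization.inr_mul,
          hA, hB]
  -- equivariance of `iot` for the bracket operation
  have key_b : ∀ (g h : G) (X : TensorSlice A B g) (Y : TensorSlice A B h),
      iot (p * c * g * h) (tbrk PA PB hcomp g h X Y) = LB βA βB (iot g X) (iot h Y) := by
    intro g h X Y
    refine TensorSlice.ind
      (P := fun X => iot (p * c * g * h) (tbrk PA PB hcomp g h X Y)
        = LB βA βB (iot g X) (iot h Y))
      ?_ (fun x u hxu a b₀ => ?_) (fun s t ihs iht => ?_) X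
    · simp only [map_zero, AddMonoidHom.zero_apply, LinearMap.zero_apply]
    swap
    · simp only [map_add, AddMonoidHom.add_apply, ihs, iht, LinearMap.add_apply]
    · subst hxu
      rw [castSl_rfl]
      refine TensorSlice.ind
        (P := fun Y => iot (p * c * (x * u) * h) (tbrk PA PB hcomp (x * u) h (emb A B a b₀) Y)
          = LB βA βB (iot (x * u) (emb A B a b₀)) (iot h Y))
        ?_ (fun y v hyv a' b' => ?_) (fun s t ihs iht => ?_) Y
      · simp only [map_zero, AddMonoidHom.zero_apply]
      swap
      · simp only [map_add, ihs, iht]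
      · subst hyv
        rw [castSl_rfl]
        have hA : DirectSum.of A x a * DirectSum.of A y a'
            = DirectSum.of A (p * x * y) (PA.star a a') := gs_of PA x y a a'
        have hB : DirectSum.of B u b₀ * DirectSum.of B v b'
            = DirectSum.of B (q * u * v) (PB.star b₀ b') := gs_of PB u v b₀ b'
        have hbA : βA.br (Unitization.inr (DirectSum.of A x a))
              (Unitization.inr (DirectSum.of A y a'))
            = Unitization.inr (DirectSum.of A (b * x * y) (PA.bracket a a')) := by
          rw [BrRing.unitize_br_inr]
          show (Unitization.inr (gb PA (DirectSum.of A x a) (DirectSum.of A y a'))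
            : Unitization ℤ (DirectSum G A)) = _
          rw [gb_of]
        have hbB : βB.br (Unitization.inr (DirectSum.of B u b₀))
              (Unitization.inr (DirectSum.of B v b'))
            = Unitization.inr (DirectSum.of B (c * u * v) (PB.bracket b₀ b')) := by
          rw [BrRing.unitize_br_inr]
          show (Unitization.inr (gb PB (DirectSum.of B u b₀) (DirectSum.of B v b'))
            : Unitization ℤ (DirectSum G B)) = _
          rw [gb_of]
        rw [tbrk_emb, map_add, iot_cast, iot_cast, iot_emb, iot_emb, iot_emb, iot_emb,
          LB_tmul, hbA, hbB, ← Unitization.inr_mul, ← Unitization.inr_mul, hA, hB]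
  refine ⟨{ star := fun {g h} X Y => tstar PA PB g h X Y
            bracket := fun {g h} X Y => tbrk PA PB hcomp g h X Y
            star_addl := fun {g h} X Y Z => by
              show tstar PA PB g h (X + Y) Z = tstar PA PB g h X Z + tstar PA PB g h Y Z
              rw [map_add]; rfl
            star_addr := fun X Y Z => map_add _ _ _
            bracket_addl := fun {g h} X Y Z => by
              show tbrk PA PB hcomp g h (X + Y) Z
                  = tbrk PA PB hcomp g h X Z + tbrk PA PB hcomp g h Y Z
              rw [map_add]; rfl
            bracket_addr := fun X Y Z => map_add _ _ _
            star_comm := fun {g h} X Y => by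
              refine (castSl_eq_iff_heq (by ac_rfl) _ _).mp ?_
              apply iot_inj
              rw [iot_cast, key_s, key_s, mul_comm]
            star_assoc := fun {g h k} X Y Z => by
              refine (castSl_eq_iff_heq (by ac_rfl) _ _).mp ?_
              apply iot_inj
              rw [iot_cast, key_s, key_s, key_s, key_s, mul_assoc]
            bracket_antisymm := fun {g h} X Y => by
              refine (castSl_eq_iff_heq (by ac_rfl) _ _).mp ?_
              apply iot_inj
              rw [iot_cast, map_neg, key_b, key_b]
              exact LB_anti βA βB _ _
            jacobi := fun {g h k} X Y Z => by
              apply iot_inj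
              simp only [map_add, map_zero, iot_cast, key_b]
              exact LB_jac βA βB _ _ _
            leibniz := fun {g h k} X Y Z => by
              apply iot_inj
              simp only [map_add, iot_cast, key_b, key_s]
              exact LB_leib βA βB _ _ _ }, ?_⟩
  intro x y u v a a' b₀ b'
  exact ⟨tstar_emb PA PB a b₀ a' b', tbrk_emb PA PB hcomp a b₀ a' b'⟩
end
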